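/- With δ(A) = p·trdeg(A) − |A∩N| on finite subsets of an algebraically closed field K (p ≥ 2, N ⊆ K): if B ≤ A is a minimal self-sufficient extension of finite colored sets and A contains a point a ∉ B with a ∉ N (a 'white' point), then A = B ∪ {a}, and δ(A/B) = 0 if a is algebraic over the field generated by B, while δ(A/B) = p if a is transcendental over B. -/

import Mathlib

/-!
`ftrdeg K A` is the rank of `A` in the algebraic matroid of `K` over its prime field, whose
closure operator is "algebraic over the field generated by". Adding a white point `a` to a set
changes `δ` by `p` times the rank increase, which is `0` or `1` according as `a` is algebraic or
transcendental over the set. In particular `δ` never drops when a white point is added, so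
`B ⊆ A.erase a ⊊ A` forces `A.erase a = B` by minimality.
-/

open scoped Classical

noncomputable def ftrdeg (K : Type*) [Field K] (A : Finset K) : ℕ :=
  sSup {n | ∃ s ⊆ A, s.card = n ∧
    AlgebraicIndependent (⊥ : Subfield K) (fun x : {y : K // y ∈ s} => (x : K))}

noncomputable def deltaF (K : Type*) [Field K] (p : ℕ) (N : Set K) (A : Finset K) : ℤ :=
  (p : ℤ) * ftrdeg K A - (A.filter (· ∈ N)).card

abbrev primeAlgMatroid (K : Type*) [Field K] : Matroid K :=
  AlgebraicIndependent.matroid (⊥ : Subfield K) K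

section Matroid

variable {K : Type*} [Field K]

open AlgebraicIndependent

theorem ftrdeg_eq_eRk (A : Finset K) : (ftrdeg K A : ℕ∞) = (primeAlgMatroid K).eRk A := by
  obtain ⟨I, hI⟩ := (primeAlgMatroid K).exists_isBasis' (A : Set K)
  have hIfin : I.Finite := A.finite_toSet.subset hI.subset
  rw [hI.eRk_eq_encard, ← hIfin.coe_toFinset, Set.encard_coe_eq_coe_finsetCard]
  congr 1
  refine IsGreatest.csSup_eq ⟨⟨hIfin.toFinset, by simpa using hI.subset, rfl, ?_⟩, ?_⟩
  · have := matroid_indep_iff.mp hI.indep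
    rw [← hIfin.coe_toFinset] at this
    exact this
  rintro _ ⟨s, hsA, rfl, hs⟩
  have := (matroid_indep_iff.mpr hs).encard_le_eRk_of_subset (X := A) (by simpa)
  rw [hI.eRk_eq_encard, ← hIfin.coe_toFinset, Set.encard_coe_eq_coe_finsetCard,
    Set.encard_coe_eq_coe_finsetCard] at this
  exact_mod_cast this

theorem IntermediateField.adjoin_bot_toSubfield (S : Set K) :
    (IntermediateField.adjoin (⊥ : Subfield K) S).toSubfield = Subfield.closure S := by
  rw [IntermediateField.adjoin_toSubfield]
  refine le_antisymm (Subfield.closure_le.mpr (Set.union_subset ?_ Subfield.subset_closure))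
    (Subfield.closure_mono Set.subset_union_right)
  rintro _ ⟨x, rfl⟩
  exact bot_le (α := Subfield K) x.2

-- The matroid closure is taken over `Algebra.adjoin`, whose fraction field is algebraic over it.
open IntermediateField.algebraAdjoinAdjoin in
theorem mem_primeAlgMatroid_closure_iff (S : Set K) (a : K) :
    a ∈ (primeAlgMatroid K).closure S ↔ IsAlgebraic (Subfield.closure S) a := by
  rw [matroid_closure_eq, SetLike.mem_coe, Subalgebra.mem_algebraicClosure,
    Algebra.IsAlgebraic.isAlgebraic_iff (Algebra.adjoin (⊥ : Subfield K) S)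
      (IntermediateField.adjoin (⊥ : Subfield K) S), ← IntermediateField.adjoin_bot_toSubfield]
  rfl

theorem ftrdeg_mono {A A' : Finset K} (h : A ⊆ A') : ftrdeg K A ≤ ftrdeg K A' := by
  have := (primeAlgMatroid K).eRk_mono (Finset.coe_subset.mpr h)
  rwa [← ftrdeg_eq_eRk, ← ftrdeg_eq_eRk, Nat.cast_le] at this

theorem ftrdeg_insert_of_isAlgebraic {B : Finset K} {a : K}
    (ha : IsAlgebraic (Subfield.closure (B : Set K)) a) :
    ftrdeg K (insert a B) = ftrdeg K B := by
  have ha' := (mem_primeAlgMatroid_closure_iff _ a).mpr ha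
  have := (primeAlgMatroid K).eRk_insert_closure_eq a B
  rw [Set.insert_eq_of_mem ha', Matroid.eRk_closure_eq] at this
  rw [← Nat.cast_inj (R := ℕ∞), ftrdeg_eq_eRk, ftrdeg_eq_eRk, Finset.coe_insert, this]

theorem ftrdeg_insert_of_transcendental {B : Finset K} {a : K}
    (ha : Transcendental (Subfield.closure (B : Set K)) a) :
    ftrdeg K (insert a B) = ftrdeg K B + 1 := by
  have ha' : a ∈ (primeAlgMatroid K).E \ (primeAlgMatroid K).closure B :=
    ⟨Set.mem_univ a, fun h => ha ((mem_primeAlgMatroid_closure_iff _ a).mp h)⟩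
  rw [← Nat.cast_inj (R := ℕ∞), Nat.cast_succ, ftrdeg_eq_eRk, ftrdeg_eq_eRk, Finset.coe_insert,
    Matroid.eRk_insert_eq_add_one ha']

end Matroid

section Delta

variable {K : Type*} [Field K] (p : ℕ) {N : Set K}

theorem deltaF_insert_sub {a : K} (haN : a ∉ N) (A : Finset K) :
    deltaF K p N (insert a A) - deltaF K p N A =
      p * ((ftrdeg K (insert a A) : ℤ) - ftrdeg K A) := by
  unfold deltaF
  rw [Finset.filter_insert, if_neg haN]
  ring

theorem deltaF_le_insert {a : K} (haN : a ∉ N) (A : Finset K) :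
    deltaF K p N A ≤ deltaF K p N (insert a A) := by
  have hmono : (ftrdeg K A : ℤ) ≤ ftrdeg K (insert a A) :=
    Nat.cast_le.mpr (ftrdeg_mono (Finset.subset_insert a A))
  rw [← sub_nonneg, deltaF_insert_sub p haN]
  exact mul_nonneg (Nat.cast_nonneg p) (sub_nonneg.mpr hmono)

theorem eq_insert_of_minimal {B A : Finset K} (hBA : B ⊆ A)
    (hmin : ∀ Y' : Finset K, B ⊂ Y' → Y' ⊂ A → deltaF K p N A - deltaF K p N Y' < 0)
    {a : K} (haA : a ∈ A) (haB : a ∉ B) (haN : a ∉ N) : A = insert a B := by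
  have hB : B ⊆ A.erase a := fun x hx =>
    Finset.mem_erase.mpr ⟨ne_of_mem_of_not_mem hx haB, hBA hx⟩
  rcases hB.eq_or_ssubset with h | h
  · rw [h, Finset.insert_erase haA]
  · have hlt := hmin _ h (Finset.erase_ssubset haA)
    have hle := deltaF_le_insert p haN (A.erase a)
    rw [Finset.insert_erase haA] at hle
    omega

end Delta

theorem minimal_extension_white_general (K : Type*) [Field K]
    (p : ℕ) (N : Set K)
    (B A : Finset K) (hBA : B ⊂ A)
    (hmin : ∀ Y' : Finset K, B ⊂ Y' → Y' ⊂ A →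
      deltaF K p N A - deltaF K p N Y' < 0)
    (a : K) (haA : a ∈ A) (haB : a ∉ B) (haN : a ∉ N) :
    A = B ∪ {a} ∧
    (IsAlgebraic (Subfield.closure (B : Set K)) a →
      deltaF K p N A - deltaF K p N B = 0) ∧
    (Transcendental (Subfield.closure (B : Set K)) a →
      deltaF K p N A - deltaF K p N B = p) := by
  have hA : A = insert a B := eq_insert_of_minimal p hBA.subset hmin haA haB haN
  refine ⟨hA.trans (Finset.union_singleton a B).symm, fun halg => ?_, fun htr => ?_⟩
  · rw [hA, deltaF_insert_sub p haN, ftrdeg_insert_of_isAlgebraic halg, sub_self, mul_zero]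
  · rw [hA, deltaF_insert_sub p haN, ftrdeg_insert_of_transcendental htr]
    push_cast
    ring

/-- if `B ≤ A` is a minimal self-sufficient extension of finite colored
sets containing a white point `a ∉ B`, then `A = B ∪ {a}`, and `δ(A/B) = 0` if `a` is
algebraic over the field generated by `B`, while `δ(A/B) = p` if `a` is transcendental. -/
theorem minimal_extension_white (K : Type*) [Field K] [IsAlgClosed K]
    (p : ℕ) (hp : 2 ≤ p) (N : Set K)
    (B A : Finset K) (hBA : B ⊂ A)
    (hss : ∀ C : Finset K, C ⊆ A → deltaF K p N (C ∩ B) ≤ deltaF K p N C)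
    (hmin : ∀ Y' : Finset K, B ⊂ Y' → Y' ⊂ A →
      deltaF K p N A - deltaF K p N Y' < 0)
    (a : K) (haA : a ∈ A) (haB : a ∉ B) (haN : a ∉ N) :
    A = B ∪ {a} ∧
    (IsAlgebraic (Subfield.closure (B : Set K)) a →
      deltaF K p N A - deltaF K p N B = 0) ∧
    (Transcendental (Subfield.closure (B : Set K)) a →
      deltaF K p N A - deltaF K p N B = p) :=
  minimal_extension_white_general K p N B A hBA hmin a haA haB haN
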